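/- (Proposition 4) Fix I ∈ ℕ, q > 0, η > 0, L > 0, masses m_i > 0, N_t, N_x ∈ ℕ, Δx = 1/N_x, Δt > 0, and if q ≠ 1 assume there is 𝔤 > 0 with 1 − 2|1−q|η^{-1}L ≥ 𝔤. Suppose the given values Φ^{(i)}_{k,l} satisfy 0 ≤ Φ^{(i)}_{k,l} ≤ L for all i, k, l, and suppose Δt ≤ ( exp_q(−2η^{-1}L) / exp_q(2η^{-1}L) )^q. If the initial data satisfy μ_{i,0,l} ≥ 0 for all l and Σ_{l=1}^{N_x} μ_{i,0,l} = m_i for each i, then the values produced by the forward finite difference scheme satisfy μ_{i,k,l} ≥ 0 for all i ∈ {1,…,I}, k ∈ {0,…,N_t}, l ∈ {1,…,N_x}, and Σ_{l=1}^{N_x} μ_{i,k,l} = m_i for each i and every k ∈ {0,…,N_t}. -/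
import Mathlib


open Real

noncomputable section

/-- Tsallis deformed exponential `exp_q`. -/
noncomputable def texp (q z : ℝ) : ℝ :=
  if q = 1 then Real.exp z else (max (1 + (1 - q) * z) 0) ^ ((1:ℝ) / (1 - q))

/-- The discretized optimal control
`φ*_{i,k,m,l} = exp_q(η⁻¹(Φ^{(i)}_{k,m} − Φ^{(i)}_{k,l})) /
  ( Σ_o exp_q(η⁻¹(Φ^{(i)}_{k,o} − Φ^{(i)}_{k,l})) Δx )`. -/
noncomputable def φstar (I Nx : ℕ) (q η Δx : ℝ) (Φ : Fin I → ℕ → Fin Nx → ℝ)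
    (i : Fin I) (k : ℕ) (m l : Fin Nx) : ℝ :=
  texp q (η⁻¹ * (Φ i k m - Φ i k l)) /
    (∑ o, texp q (η⁻¹ * (Φ i k o - Φ i k l)) * Δx)

lemma texp_nonneg (q z : ℝ) : 0 ≤ texp q z := by
  unfold texp
  by_cases hq1 : q = 1
  · simp [hq1, (Real.exp_pos z).le]
  · simp only [if_neg hq1]
    exact Real.rpow_nonneg (le_max_right _ _) _

lemma texp_pos {q z : ℝ} (h : q ≠ 1 → 0 < 1 + (1 - q) * z) : 0 < texp q z := by
  unfold texp
  by_cases hq1 : q = 1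
  · simp [hq1, Real.exp_pos]
  · simp only [if_neg hq1]
    exact Real.rpow_pos_of_pos (lt_of_lt_of_le (h hq1) (le_max_left _ _)) _

lemma texp_le_texp {q z1 z2 : ℝ} (h : z1 ≤ z2)
    (h1 : q ≠ 1 → 0 < 1 + (1 - q) * z1) (h2 : q ≠ 1 → 0 < 1 + (1 - q) * z2) :
    texp q z1 ≤ texp q z2 := by
  unfold texp
  by_cases hq1 : q = 1
  · simp [hq1, Real.exp_le_exp, h]
  · simp only [if_neg hq1]
    have hb1 := h1 hq1
    have hb2 := h2 hq1
    rw [max_eq_left hb1.le, max_eq_left hb2.le]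
    have hne : (1:ℝ) - q ≠ 0 := sub_ne_zero.mpr (fun hh => hq1 hh.symm)
    rcases hne.lt_or_gt with hlt | hlt
    · -- 1 - q < 0, exponent negative, base antitone
      have hbase : 1 + (1 - q) * z2 ≤ 1 + (1 - q) * z1 := by nlinarith
      have hexp : (1:ℝ) / (1 - q) ≤ 0 :=
        div_nonpos_of_nonneg_of_nonpos zero_le_one hlt.le
      exact Real.rpow_le_rpow_of_nonpos hb2 hbase hexp
    · have hbase : 1 + (1 - q) * z1 ≤ 1 + (1 - q) * z2 := by nlinarith
      have hexp : (0:ℝ) ≤ 1 / (1 - q) := by positivity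
      exact Real.rpow_le_rpow hb1.le hbase hexp

/-- Proposition 4: given values `0 ≤ Φ^{(i)}_{k,l} ≤ L` and
`Δt ≤ (exp_q(−2η⁻¹L)/exp_q(2η⁻¹L))^q`, the forward finite difference scheme
preserves nonnegativity and the total masses `m_i` of the discretized measures. -/
theorem discrete_fp_nonneg_mass (I Nt Nx : ℕ) (q η L Δt Δx : ℝ) (m : Fin I → ℝ)
    (hq : 0 < q) (hη : 0 < η) (hL : 0 < L) (hm : ∀ i, 0 < m i)
    (hA2 : q ≠ 1 → ∃ g > 0, 1 - 2 * |1 - q| * η⁻¹ * L ≥ g)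
    (hNx : 0 < Nx) (hΔx : Δx = 1 / (Nx : ℝ)) (hΔt : 0 < Δt)
    (hΔt' : Δt ≤ (texp q (-(2 * η⁻¹ * L)) / texp q (2 * η⁻¹ * L)) ^ q)
    (Φ : Fin I → ℕ → Fin Nx → ℝ)
    (hΦ : ∀ (i : Fin I) (k : ℕ) (l : Fin Nx), 0 ≤ Φ i k l ∧ Φ i k l ≤ L)
    (μ : Fin I → ℕ → Fin Nx → ℝ)
    (hinit : ∀ (i : Fin I) (l : Fin Nx), 0 ≤ μ i 0 l)
    (hmass0 : ∀ i : Fin I, ∑ l, μ i 0 l = m i)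
    (hrec : ∀ (i : Fin I) (k : ℕ) (l : Fin Nx), k < Nt →
      μ i (k+1) l = μ i k l + Δt *
        ((∑ mm, (φstar I Nx q η Δx Φ i k l mm) ^ q * μ i k mm * Δx) -
          (∑ mm, (φstar I Nx q η Δx Φ i k mm l) ^ q * Δx) * μ i k l)) :
    (∀ (i : Fin I) (k : ℕ) (l : Fin Nx), k ≤ Nt → 0 ≤ μ i k l) ∧
    (∀ (i : Fin I) (k : ℕ), k ≤ Nt → ∑ l, μ i k l = m i) := by
  have hη' : 0 < η⁻¹ := inv_pos.mpr hη
  have hΔx0 : 0 < Δx := by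
    rw [hΔx]; positivity
  have hsum1 : ∑ _o : Fin Nx, Δx = 1 := by
    rw [Finset.sum_const, Finset.card_univ, Fintype.card_fin, hΔx, nsmul_eq_mul]
    field_simp
  -- positivity of the base on the relevant range
  have hbase : ∀ z : ℝ, -(2 * η⁻¹ * L) ≤ z → z ≤ 2 * η⁻¹ * L →
      q ≠ 1 → 0 < 1 + (1 - q) * z := by
    intro z hz1 hz2 hq1
    obtain ⟨g, hg, hge⟩ := hA2 hq1
    rcases abs_cases (1 - q) with ⟨he, hs⟩ | ⟨he, hs⟩ <;> rw [he] at hge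
    · nlinarith [mul_nonneg hs (by linarith : (0:ℝ) ≤ z + 2 * η⁻¹ * L)]
    · nlinarith [mul_nonneg (by linarith : (0:ℝ) ≤ q - 1)
        (by linarith : (0:ℝ) ≤ 2 * η⁻¹ * L - z)]
  set a := texp q (-(2 * η⁻¹ * L)) with ha_def
  set b := texp q (2 * η⁻¹ * L) with hb_def
  have h2L : 0 < 2 * η⁻¹ * L := by positivity
  have ha : 0 < a := texp_pos (hbase _ le_rfl (by linarith))
  have hb : 0 < b := texp_pos (hbase _ (by linarith) le_rfl)
  -- bounds on the arguments of texp
  have hzbd : ∀ (i : Fin I) (k : ℕ) (o l : Fin Nx),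
      -(2 * η⁻¹ * L) ≤ η⁻¹ * (Φ i k o - Φ i k l) ∧
      η⁻¹ * (Φ i k o - Φ i k l) ≤ 2 * η⁻¹ * L := by
    intro i k o l
    obtain ⟨h1, h2⟩ := hΦ i k o
    obtain ⟨h3, h4⟩ := hΦ i k l
    constructor <;> nlinarith
  have hzpos : ∀ (i : Fin I) (k : ℕ) (o l : Fin Nx), q ≠ 1 →
      0 < 1 + (1 - q) * (η⁻¹ * (Φ i k o - Φ i k l)) := by
    intro i k o l
    exact hbase _ (hzbd i k o l).1 (hzbd i k o l).2
  -- bound on φstar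
  have hφnn : ∀ (i : Fin I) (k : ℕ) (mm l : Fin Nx), 0 ≤ φstar I Nx q η Δx Φ i k mm l := by
    intro i k mm l
    apply div_nonneg (texp_nonneg _ _)
    exact Finset.sum_nonneg fun o _ => mul_nonneg (texp_nonneg _ _) hΔx0.le
  have hφub : ∀ (i : Fin I) (k : ℕ) (mm l : Fin Nx),
      φstar I Nx q η Δx Φ i k mm l ≤ b / a := by
    intro i k mm l
    unfold φstar
    have hnum : texp q (η⁻¹ * (Φ i k mm - Φ i k l)) ≤ b :=
      texp_le_texp (hzbd i k mm l).2 (hzpos i k mm l)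
        (hbase _ (by linarith) le_rfl)
    have hden : a ≤ ∑ o, texp q (η⁻¹ * (Φ i k o - Φ i k l)) * Δx := by
      calc a = ∑ _o : Fin Nx, a * Δx := by
              rw [← Finset.mul_sum, hsum1, mul_one]
        _ ≤ ∑ o, texp q (η⁻¹ * (Φ i k o - Φ i k l)) * Δx := by
              apply Finset.sum_le_sum
              intro o _
              exact mul_le_mul_of_nonneg_right
                (texp_le_texp (hzbd i k o l).1 (hbase _ le_rfl (by linarith))
                  (hzpos i k o l)) hΔx0.le
    exact div_le_div₀ hb.le hnum ha hden
  -- the key step bound : Δt * (∑ φ^q Δx) ≤ 1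
  have hstep : ∀ (i : Fin I) (k : ℕ) (l : Fin Nx),
      Δt * (∑ mm, (φstar I Nx q η Δx Φ i k mm l) ^ q * Δx) ≤ 1 := by
    intro i k l
    have hB : (∑ mm, (φstar I Nx q η Δx Φ i k mm l) ^ q * Δx) ≤ (b / a) ^ q := by
      calc (∑ mm, (φstar I Nx q η Δx Φ i k mm l) ^ q * Δx)
          ≤ ∑ _mm : Fin Nx, (b / a) ^ q * Δx := by
            apply Finset.sum_le_sum
            intro mm _
            exact mul_le_mul_of_nonneg_right
              (Real.rpow_le_rpow (hφnn i k mm l) (hφub i k mm l) hq.le) hΔx0.le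
        _ = (b / a) ^ q := by rw [← Finset.mul_sum, hsum1, mul_one]
    have hBnn : 0 ≤ (∑ mm, (φstar I Nx q η Δx Φ i k mm l) ^ q * Δx) :=
      Finset.sum_nonneg fun mm _ =>
        mul_nonneg (Real.rpow_nonneg (hφnn i k mm l) q) hΔx0.le
    calc Δt * (∑ mm, (φstar I Nx q η Δx Φ i k mm l) ^ q * Δx)
        ≤ (a / b) ^ q * (b / a) ^ q := by
          apply mul_le_mul hΔt' hB hBnn (Real.rpow_nonneg (by positivity) q)
      _ = ((a / b) * (b / a)) ^ q := by
          rw [← Real.mul_rpow (by positivity) (by positivity)]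
      _ = 1 := by
          rw [div_mul_div_comm, mul_comm a b, div_self (by positivity), Real.one_rpow]
  -- nonnegativity
  have nonneg : ∀ (i : Fin I) (k : ℕ), k ≤ Nt → ∀ (l : Fin Nx), 0 ≤ μ i k l := by
    intro i k
    induction k with
    | zero => intro _ l; exact hinit i l
    | succ k ih =>
      intro hk l
      have hk' : k < Nt := hk
      have ihk := ih hk'.le
      rw [hrec i k l hk']
      have hA : 0 ≤ ∑ mm, (φstar I Nx q η Δx Φ i k l mm) ^ q * μ i k mm * Δx :=
        Finset.sum_nonneg fun mm _ =>
          mul_nonneg (mul_nonneg (Real.rpow_nonneg (hφnn i k l mm) q) (ihk mm)) hΔx0.le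
      have hBμ := mul_le_mul_of_nonneg_right (hstep i k l) (ihk l)
      nlinarith [mul_nonneg hΔt.le hA]
  refine ⟨fun i k l hk => nonneg i k hk l, ?_⟩
  intro i k
  induction k with
  | zero => intro _; exact hmass0 i
  | succ k ih =>
    intro hk
    have hk' : k < Nt := hk
    have h1 : ∑ l, ∑ mm, (φstar I Nx q η Δx Φ i k l mm) ^ q * μ i k mm * Δx =
        ∑ l, (∑ mm, (φstar I Nx q η Δx Φ i k mm l) ^ q * Δx) * μ i k l := by
      rw [Finset.sum_comm]
      apply Finset.sum_congr rfl
      intro l _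
      rw [Finset.sum_mul]
      apply Finset.sum_congr rfl
      intro mm _
      ring
    have hsame : ∑ l, μ i (k+1) l = ∑ l, μ i k l := by
      calc ∑ l, μ i (k+1) l
          = ∑ l, (μ i k l + Δt *
              ((∑ mm, (φstar I Nx q η Δx Φ i k l mm) ^ q * μ i k mm * Δx) -
                (∑ mm, (φstar I Nx q η Δx Φ i k mm l) ^ q * Δx) * μ i k l)) :=
            Finset.sum_congr rfl fun l _ => hrec i k l hk'
        _ = ∑ l, μ i k l := by
            rw [Finset.sum_add_distrib, ← Finset.mul_sum, Finset.sum_sub_distrib, h1,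
              sub_self, mul_zero, add_zero]
    rw [hsame, ih hk'.le]

end
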